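/- Setting Q = exp(i φ) with φ = -(u₂+u₁)/2 and k = pq/4, the discrete sine-Gordon equation sin((u₁₂ - u₁ - u₂ + u)/4) = (pq/4) sin((u₁₂ + u₁ + u₂ + u)/4) implies the rational relation Q₁₂·Q = ((Q₂ - k₂)/(1 - k₂Q₂))·((Q₁ - k₁)/(1 - k₁Q₁)), provided the denominators are nonzero. -/

import Mathlib

/-!
With `a = (u₁₂ - u₁ - u₂ + u)/4` and `b = (u₁₂ + u₁ + u₂ + u)/4` one has `Q = e^{i(a-b)}` and
`e^{-i(u₁₂+u)/2} = e^{-i(a+b)}`. The Möbius map `z ↦ (z - k)/(1 - k z)` sends `e^{i(a-b)}` to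
`e^{-i(a+b)}` exactly when `sin a = k sin b`: clearing denominators and multiplying by `e^{ib}`
turns the claim into `e^{ia} - e^{-ia} = k (e^{ib} - e^{-ib})`. Applying this on the two
plaquettes adjacent to `Q₁` and `Q₂` gives two exponentials whose product is `Q₁₂ Q`.
-/

open Matrix Complex

noncomputable section

/-- `Q(n,m) = exp(i φ⁽¹⁾) = exp(-i(u(n,m+1)+u(n+1,m))/2)`. -/
def Qfun (u : ℤ → ℤ → ℝ) (n m : ℤ) : ℂ :=
  Complex.exp (-Complex.I * ((u n (m+1) + u (n+1) m)/2))

/-- `k(n,m) = p(n) q(m) / 4`. -/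
def kfun (p q : ℤ → ℝ) (n m : ℤ) : ℂ := ((p n * q m / 4 : ℝ) : ℂ)

theorem Complex.exp_mul_I_sub_exp_neg_mul_I (z : ℂ) :
    exp (z * I) - exp (-z * I) = 2 * I * sin z := by
  linear_combination -I * two_sin (x := z) - (exp (-z * I) - exp (z * I)) * I_sq

theorem Complex.exp_mul_I_mul_exp_neg_mul_I (z : ℂ) : exp (z * I) * exp (-z * I) = 1 := by
  rw [← exp_add, neg_mul, add_neg_cancel, exp_zero]

theorem Complex.exp_sub_div_one_sub_mul_exp_of_sin_eq {a b k : ℂ} (hsin : sin a = k * sin b)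
    (hden : 1 - k * exp ((a - b) * I) ≠ 0) :
    (exp ((a - b) * I) - k) / (1 - k * exp ((a - b) * I)) = exp (-(a + b) * I) := by
  have hsub : exp ((a - b) * I) = exp (a * I) * exp (-b * I) := by rw [← exp_add]; ring_nf
  have hadd : exp (-(a + b) * I) = exp (-a * I) * exp (-b * I) := by rw [← exp_add]; ring_nf
  rw [div_eq_iff hden, hsub, hadd]
  linear_combination exp (-b * I) * exp_mul_I_sub_exp_neg_mul_I a
    - k * exp (-b * I) * exp_mul_I_sub_exp_neg_mul_I b + 2 * I * exp (-b * I) * hsin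
    + k * exp (-b * I) ^ 2 * exp_mul_I_mul_exp_neg_mul_I a + k * exp_mul_I_mul_exp_neg_mul_I b

theorem Qfun_sub_kfun_div (u : ℤ → ℤ → ℝ) (p q : ℤ → ℝ) (n m : ℤ)
    (hsg : Real.sin ((u (n+1) (m+1) - u (n+1) m - u n (m+1) + u n m)/4) =
        (p n * q m / 4) * Real.sin ((u (n+1) (m+1) + u (n+1) m + u n (m+1) + u n m)/4))
    (hden : 1 - kfun p q n m * Qfun u n m ≠ 0) :
    (Qfun u n m - kfun p q n m) / (1 - kfun p q n m * Qfun u n m) =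
      exp (-I * ((u (n+1) (m+1) + u n m) / 2)) := by
  set a : ℂ := (((u (n+1) (m+1) - u (n+1) m - u n (m+1) + u n m) / 4 : ℝ) : ℂ)
  set b : ℂ := (((u (n+1) (m+1) + u (n+1) m + u n (m+1) + u n m) / 4 : ℝ) : ℂ)
  have hQ : Qfun u n m = exp ((a - b) * I) := by
    unfold Qfun; congr 1; push_cast [a, b]; ring
  have hsin : sin a = kfun p q n m * sin b := by
    simp only [a, b, kfun, ← ofReal_sin, hsg, ofReal_mul]
  rw [hQ] at hden ⊢
  rw [exp_sub_div_one_sub_mul_exp_of_sin_eq hsin hden]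
  congr 1; push_cast [a, b]; ring

/-- The discrete sine-Gordon equation implies the rational relation
`Q₁₂ Q = ((Q₂-k₂)/(1-k₂Q₂))((Q₁-k₁)/(1-k₁Q₁))`, provided the denominators
are nonzero. -/
theorem hirota_to_Q_equation (u : ℤ → ℤ → ℝ) (p q : ℤ → ℝ)
    (hsg : ∀ n m : ℤ,
      Real.sin ((u (n+1) (m+1) - u (n+1) m - u n (m+1) + u n m)/4) =
        (p n * q m / 4) *
          Real.sin ((u (n+1) (m+1) + u (n+1) m + u n (m+1) + u n m)/4)) :
    ∀ n m : ℤ,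
      1 - kfun p q n (m+1) * Qfun u n (m+1) ≠ 0 →
      1 - kfun p q (n+1) m * Qfun u (n+1) m ≠ 0 →
      Qfun u (n+1) (m+1) * Qfun u n m =
        ((Qfun u n (m+1) - kfun p q n (m+1)) / (1 - kfun p q n (m+1) * Qfun u n (m+1))) *
        ((Qfun u (n+1) m - kfun p q (n+1) m) / (1 - kfun p q (n+1) m * Qfun u (n+1) m)) := by
  intro n m h₂ h₁
  rw [Qfun_sub_kfun_div u p q n (m+1) (hsg n (m+1)) h₂,
    Qfun_sub_kfun_div u p q (n+1) m (hsg (n+1) m) h₁, Qfun, Qfun, ← exp_add, ← exp_add]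
  congr 1
  ring

end
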